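/- Specializing the two-variable identity at x=q: ∑_{n₁,n₂ ≥ 0} q^{(3n₁²+n₁)/2 + 4n₁n₂ + 4n₂² + 2n₂} / ((q;q)_{n₁}(q²;q²)_{n₂}) = ∑_{n≥0} q^{n²+n}/(q;q)_n, as formal power series in q. -/

import Mathlib

/-!
Write `n = m + 2j`. The exponent of the double sum is `n² + n + C(m, 2)`, so the left side is
`∑ₙ q^(n² + n) Tₙ` with `Tₙ = ∑_{m + 2j = n} q^C(m, 2) / ((q;q)_m (q²;q²)_j)`. Euler's expansions
make `Tₙ` the coefficient of `zⁿ` in `(-z;q)_∞ / (z²;q²)_∞ = 1 / (z;q)_∞`, i.e. `Tₙ = 1 / (q;q)ₙ`.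
Finitely, this is the recursion `(1 - q^(n+1)) T_{n+1} = Tₙ`: split
`1 - q^(m+2j) = (1 - q^m) + q^m (1 - q^(2j))` and lower `m`, resp. `j`, by one.
-/

open Finset

/-- `(q;q)_n = ∏_{i=1}^n (1 - q^i)`. -/
noncomputable def qFac (q : ℂ) (n : ℕ) : ℂ :=
  ∏ i ∈ Finset.range n, (1 - q ^ (i + 1))

open Filter Topology

lemma qFac_succ (q : ℂ) (n : ℕ) : qFac q (n + 1) = qFac q n * (1 - q ^ (n + 1)) :=
  prod_range_succ _ _

lemma qFac_ne_zero {q : ℂ} (hq : ∀ n, q ^ (n + 1) ≠ 1) (n : ℕ) : qFac q n ≠ 0 :=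
  prod_ne_zero_iff.2 fun i _ => sub_ne_zero.2 (hq i).symm

lemma sq_pow_succ_ne_one {q : ℂ} (hq : ∀ n, q ^ (n + 1) ≠ 1) (n : ℕ) : (q ^ 2) ^ (n + 1) ≠ 1 := by
  rw [← pow_mul]
  exact hq (2 * n + 1)

lemma pow_succ_ne_one_of_norm_lt_one {q : ℂ} (hq : ‖q‖ < 1) (n : ℕ) : q ^ (n + 1) ≠ 1 := by
  intro h
  have := congrArg norm h
  rw [norm_pow, norm_one] at this
  exact (pow_lt_one₀ (norm_nonneg q) hq n.succ_ne_zero).ne this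

lemma pow_le_norm_qFac {q : ℂ} (hq : ‖q‖ ≤ 1) (n : ℕ) : (1 - ‖q‖) ^ n ≤ ‖qFac q n‖ := by
  rw [qFac, norm_prod, show (1 - ‖q‖) ^ n = ∏ _i ∈ range n, (1 - ‖q‖) by simp]
  refine prod_le_prod (fun _ _ => sub_nonneg.2 hq) fun i _ => ?_
  calc 1 - ‖q‖ ≤ 1 - ‖q‖ ^ (i + 1) := by
        gcongr
        exact pow_le_of_le_one (norm_nonneg q) hq i.succ_ne_zero
    _ = ‖(1 : ℂ)‖ - ‖q ^ (i + 1)‖ := by rw [norm_one, norm_pow]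
    _ ≤ ‖1 - q ^ (i + 1)‖ := norm_sub_norm_le _ _

def level (n : ℕ) : Finset (ℕ × ℕ) :=
  (range (n + 1) ×ˢ range (n + 1)).filter fun p => p.1 + 2 * p.2 = n

@[simp]
lemma mem_level {n : ℕ} {p : ℕ × ℕ} : p ∈ level n ↔ p.1 + 2 * p.2 = n := by
  simp only [level, mem_filter, mem_product, mem_range]
  omega

lemma coe_level (n : ℕ) : (level n : Set (ℕ × ℕ)) = (fun p => p.1 + 2 * p.2) ⁻¹' {n} := by
  ext; simp

section Level

variable {M : Type*} [AddCommMonoid M]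

lemma sum_level_succ_of_fst_eq_zero (f : ℕ × ℕ → M) (hf : ∀ j, f (0, j) = 0) (n : ℕ) :
    ∑ p ∈ level (n + 1), f p = ∑ p ∈ level n, f (p.1 + 1, p.2) := by
  symm
  refine sum_bij_ne_zero (fun p _ _ => (p.1 + 1, p.2)) (fun p hp _ => by simp at hp ⊢; omega)
    (fun p _ _ p' _ _ h => by simp [Prod.ext_iff] at h ⊢; omega) (fun p hp hfp => ?_)
    fun _ _ _ => rfl
  obtain ⟨m, j⟩ := p
  cases m with
  | zero => exact absurd (hf j) hfp
  | succ m => exact ⟨(m, j), by simp at hp ⊢; omega, hfp, rfl⟩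

lemma sum_level_succ_of_shift (f g : ℕ × ℕ → M) (hf : ∀ m, f (m, 0) = 0)
    (hg : ∀ j, g (0, j) = 0) (hfg : ∀ m j, f (m, j + 1) = g (m + 1, j)) (n : ℕ) :
    ∑ p ∈ level (n + 1), f p = ∑ p ∈ level n, g p := by
  have snd_ne_zero : ∀ p, f p ≠ 0 → p.2 ≠ 0 := by
    rintro ⟨m, j⟩ hfp rfl
    exact hfp (hf m)
  refine sum_bij_ne_zero (fun p _ _ => (p.1 + 1, p.2 - 1))
    (fun p hp hfp => by have := snd_ne_zero p hfp; simp at hp ⊢; omega)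
    (fun p _ hfp p' _ hfp' h => ?_) (fun p hp hgp => ?_) fun p _ hfp => ?_
  · have := snd_ne_zero p hfp
    have := snd_ne_zero p' hfp'
    simp [Prod.ext_iff] at h ⊢
    omega
  · obtain ⟨m, j⟩ := p
    cases m with
    | zero => exact absurd (hg j) hgp
    | succ m => exact ⟨(m, j + 1), by simp at hp ⊢; omega, by rwa [hfg], rfl⟩
  · obtain ⟨m, j⟩ := p
    obtain ⟨j, rfl⟩ := Nat.exists_eq_succ_of_ne_zero (snd_ne_zero _ hfp)
    exact hfg m j

end Level

noncomputable def eulerTerm (q : ℂ) (p : ℕ × ℕ) : ℂ :=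
  q ^ p.1.choose 2 / (qFac q p.1 * qFac (q ^ 2) p.2)

section EulerTerm

variable {q : ℂ}

lemma one_sub_pow_mul_eulerTerm_succ_fst (hq : ∀ n, q ^ (n + 1) ≠ 1) (m j : ℕ) :
    (1 - q ^ (m + 1)) * eulerTerm q (m + 1, j) = q ^ m * eulerTerm q (m, j) := by
  have hm : 1 - q ^ (m + 1) ≠ 0 := sub_ne_zero.2 (hq m).symm
  have hc : (m + 1).choose 2 = m.choose 2 + m := by
    rw [Nat.choose_succ_succ', Nat.choose_one_right, add_comm]
  simp only [eulerTerm, qFac_succ, hc, pow_add q (m.choose 2) m]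
  field_simp [qFac_ne_zero hq m, qFac_ne_zero (sq_pow_succ_ne_one hq) j]

lemma one_sub_pow_mul_eulerTerm_succ_snd (hq : ∀ n, q ^ (n + 1) ≠ 1) (m j : ℕ) :
    (1 - q ^ (2 * (j + 1))) * eulerTerm q (m, j + 1) = eulerTerm q (m, j) := by
  have hj : 1 - (q ^ 2) ^ (j + 1) ≠ 0 := sub_ne_zero.2 (sq_pow_succ_ne_one hq j).symm
  simp only [eulerTerm, qFac_succ, pow_mul]
  field_simp [qFac_ne_zero hq m, qFac_ne_zero (sq_pow_succ_ne_one hq) j]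

lemma one_sub_pow_mul_sum_level_eulerTerm (hq : ∀ n, q ^ (n + 1) ≠ 1) (n : ℕ) :
    (1 - q ^ (n + 1)) * ∑ p ∈ level (n + 1), eulerTerm q p = ∑ p ∈ level n, eulerTerm q p := by
  set a : ℕ × ℕ → ℂ := fun p => (1 - q ^ p.1) * eulerTerm q p
  set b : ℕ × ℕ → ℂ := fun p => q ^ p.1 * (1 - q ^ (2 * p.2)) * eulerTerm q p
  have ha : ∀ m j, a (m + 1, j) = q ^ m * eulerTerm q (m, j) :=
    one_sub_pow_mul_eulerTerm_succ_fst hq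
  have hb : ∀ m j, b (m, j + 1) = a (m + 1, j) := fun m j => by
    simp only [b, mul_assoc, one_sub_pow_mul_eulerTerm_succ_snd hq, ha]
  calc (1 - q ^ (n + 1)) * ∑ p ∈ level (n + 1), eulerTerm q p
      = ∑ p ∈ level (n + 1), (a p + b p) := by
        rw [mul_sum]
        refine sum_congr rfl fun p hp => ?_
        rw [← mem_level.1 hp, pow_add, pow_mul]
        simp only [a, b, pow_mul]
        ring
    _ = ∑ p ∈ level n, q ^ p.1 * eulerTerm q p + ∑ p ∈ level n, a p := by
        rw [sum_add_distrib, sum_level_succ_of_fst_eq_zero a (by simp [a]),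
          sum_level_succ_of_shift b a (by simp [b]) (by simp [a]) hb]
        simp only [ha]
    _ = ∑ p ∈ level n, eulerTerm q p := by
        rw [← sum_add_distrib]
        exact sum_congr rfl fun p _ => by simp only [a]; ring

lemma sum_level_eulerTerm (hq : ∀ n, q ^ (n + 1) ≠ 1) (n : ℕ) :
    ∑ p ∈ level n, eulerTerm q p = (qFac q n)⁻¹ := by
  induction n with
  | zero => simp [show level 0 = {(0, 0)} from rfl, eulerTerm, qFac]
  | succ n ih =>
    have hn : 1 - q ^ (n + 1) ≠ 0 := sub_ne_zero.2 (hq n).symm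
    rw [qFac_succ, mul_inv, ← ih, ← one_sub_pow_mul_sum_level_eulerTerm hq n]
    field_simp

end EulerTerm

lemma two_mul_choose_two_add_self (m : ℕ) : 2 * m.choose 2 + m = m ^ 2 := by
  induction m with
  | zero => rfl
  | succ m ih =>
    rw [Nat.choose_succ_succ', Nat.choose_one_right]
    ring_nf at ih ⊢
    omega

lemma exponent_eq_sq_add_choose (m j : ℕ) :
    (3 * m ^ 2 + m) / 2 + 4 * m * j + 4 * j ^ 2 + 2 * j
      = (m + 2 * j) ^ 2 + (m + 2 * j) + m.choose 2 := by
  have h := two_mul_choose_two_add_self m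
  have hsq : (m + 2 * j) ^ 2 = m ^ 2 + 4 * m * j + 4 * j ^ 2 := by ring
  omega

lemma summable_pow_sq_mul_pow {r : ℝ} (hr : |r| < 1) (c : ℝ) :
    Summable fun m : ℕ => r ^ (m ^ 2) * c ^ m := by
  have hlim : Tendsto (fun m : ℕ => ‖r ^ m * c‖) atTop (𝓝 0) := by
    simpa using ((tendsto_pow_atTop_nhds_zero_of_abs_lt_one hr).mul_const c).norm
  refine summable_geometric_two.of_norm_bounded_eventually_nat ?_
  filter_upwards [hlim.eventually (ge_mem_nhds (by norm_num : (0 : ℝ) < 1 / 2))] with m hm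
  rw [show r ^ (m ^ 2) * c ^ m = (r ^ m * c) ^ m by ring, norm_pow]
  exact pow_le_pow_left₀ (norm_nonneg _) hm m

lemma hasSum_sum_level {E : Type*} [NormedAddCommGroup E] [CompleteSpace E] {f : ℕ × ℕ → E}
    {a : E} (hf : HasSum f a) : HasSum (fun n => ∑ p ∈ level n, f p) a := by
  convert hf.tsum_fiberwise (fun p => p.1 + 2 * p.2) using 2 with n
  rw [← coe_level, Finset.tsum_subtype']

lemma summable_pow_mul_eulerTerm {q : ℂ} (hq : ‖q‖ < 1) :
    Summable fun p : ℕ × ℕ => q ^ ((p.1 + 2 * p.2) ^ 2 + (p.1 + 2 * p.2)) * eulerTerm q p := by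
  have hr : |‖q‖| < 1 := by rwa [abs_norm]
  have hr1 : 0 < 1 - ‖q‖ := sub_pos.2 hq
  have hs := summable_pow_sq_mul_pow hr (1 - ‖q‖)⁻¹
  refine (hs.mul_of_nonneg hs (fun _ => by positivity) fun _ => by positivity).of_norm_bounded
    fun ⟨m, j⟩ => ?_
  have hq2 : 1 - ‖q‖ ≤ 1 - ‖q ^ 2‖ := by
    rw [norm_pow]; nlinarith [norm_nonneg q]
  calc ‖q ^ ((m + 2 * j) ^ 2 + (m + 2 * j)) * eulerTerm q (m, j)‖
      = ‖q‖ ^ ((m + 2 * j) ^ 2 + (m + 2 * j) + m.choose 2)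
          / (‖qFac q m‖ * ‖qFac (q ^ 2) j‖) := by
        simp only [eulerTerm, norm_mul, norm_div, norm_pow, pow_add, mul_div_assoc]
    _ ≤ ‖q‖ ^ (m ^ 2 + j ^ 2) / ((1 - ‖q‖) ^ m * (1 - ‖q‖) ^ j) := by
        refine div_le_div₀ (by positivity)
          (pow_le_pow_of_le_one (norm_nonneg q) hq.le (by nlinarith)) (by positivity) ?_
        refine mul_le_mul (pow_le_norm_qFac hq.le m) ?_ (by positivity) (norm_nonneg _)
        exact (pow_le_pow_left₀ hr1.le hq2 j).trans (pow_le_norm_qFac (by simpa using hq.le) j)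
    _ = ‖q‖ ^ (m ^ 2) * (1 - ‖q‖)⁻¹ ^ m * (‖q‖ ^ (j ^ 2) * (1 - ‖q‖)⁻¹ ^ j) := by
        rw [pow_add, inv_pow, inv_pow]; field_simp

theorem double_sum_RR_q (q : ℂ) (hq : ‖q‖ < 1) :
    ∑' n : ℕ × ℕ,
        q ^ ((3 * n.1 ^ 2 + n.1) / 2 + 4 * n.1 * n.2 + 4 * n.2 ^ 2 + 2 * n.2) /
          (qFac q n.1 * qFac (q ^ 2) n.2) =
      ∑' n : ℕ, q ^ (n ^ 2 + n) / qFac q n := by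
  have hsummand (p : ℕ × ℕ) :
      q ^ ((3 * p.1 ^ 2 + p.1) / 2 + 4 * p.1 * p.2 + 4 * p.2 ^ 2 + 2 * p.2) /
          (qFac q p.1 * qFac (q ^ 2) p.2) =
        q ^ ((p.1 + 2 * p.2) ^ 2 + (p.1 + 2 * p.2)) * eulerTerm q p := by
    rw [exponent_eq_sq_add_choose, pow_add, eulerTerm, mul_div_assoc]
  simp only [hsummand]
  rw [← (hasSum_sum_level (summable_pow_mul_eulerTerm hq).hasSum).tsum_eq]
  refine tsum_congr fun n => ?_
  calc ∑ p ∈ level n, q ^ ((p.1 + 2 * p.2) ^ 2 + (p.1 + 2 * p.2)) * eulerTerm q p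
      = q ^ (n ^ 2 + n) * ∑ p ∈ level n, eulerTerm q p := by
        rw [mul_sum]
        exact sum_congr rfl fun p hp => by rw [mem_level.1 hp]
    _ = q ^ (n ^ 2 + n) / qFac q n := by
        rw [sum_level_eulerTerm (pow_succ_ne_one_of_norm_lt_one hq), div_eq_mul_inv]
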